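/- Let f1, f2 : P → ℝ be the functions on the set P of conditional pmfs p(u|x,y) (with |U| ≤ |X||Y|+2) given by f1(p) = I(X;Y|U) and f2(p) = I(X,Y;U), for a fixed joint pmf q on X×Y. Then min over p of max{f1(p), (f1(p)+f2(p))/2} equals min over p of max{f1(p), f2(p)}. -/

import Mathlib

open Finset

def IsPMF {Ω : Type*} [Fintype Ω] (p : Ω → ℝ) : Prop :=
  (∀ ω, 0 ≤ p ω) ∧ ∑ ω, p ω = 1

noncomputable def pr {Ω : Type*} [Fintype Ω] {α : Type*} [Fintype α] [DecidableEq α]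
    (p : Ω → ℝ) (X : Ω → α) (x : α) : ℝ :=
  ∑ ω ∈ Finset.univ.filter (fun ω => X ω = x), p ω

/-- Shannon entropy (base 2) of the random variable `X` under `p`. -/
noncomputable def ent {Ω : Type*} [Fintype Ω] {α : Type*} [Fintype α] [DecidableEq α]
    (p : Ω → ℝ) (X : Ω → α) : ℝ :=
  -∑ x, pr p X x * Real.logb 2 (pr p X x)

/-- Conditional entropy H(X | U). -/
noncomputable def centH {Ω : Type*} [Fintype Ω] {α β : Type*} [Fintype α] [DecidableEq α]
    [Fintype β] [DecidableEq β] (p : Ω → ℝ) (X : Ω → α) (U : Ω → β) : ℝ :=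
  ent p (fun ω => (X ω, U ω)) - ent p U

/-- Mutual information I(X;Y). -/
noncomputable def mi {Ω : Type*} [Fintype Ω] {α β : Type*} [Fintype α] [DecidableEq α]
    [Fintype β] [DecidableEq β] (p : Ω → ℝ) (X : Ω → α) (Y : Ω → β) : ℝ :=
  ent p X + ent p Y - ent p (fun ω => (X ω, Y ω))

/-- Conditional mutual information I(X;Y|U). -/
noncomputable def cmi {Ω : Type*} [Fintype Ω] {α β γ : Type*} [Fintype α] [DecidableEq α]
    [Fintype β] [DecidableEq β] [Fintype γ] [DecidableEq γ]
    (p : Ω → ℝ) (X : Ω → α) (Y : Ω → β) (U : Ω → γ) : ℝ :=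
  centH p X U + centH p Y U - centH p (fun ω => (X ω, Y ω)) U

def IndepRV {Ω : Type*} [Fintype Ω] {α β : Type*} [Fintype α] [DecidableEq α]
    [Fintype β] [DecidableEq β] (p : Ω → ℝ) (X : Ω → α) (Y : Ω → β) : Prop :=
  ∀ x y, pr p (fun ω => (X ω, Y ω)) (x, y) = pr p X x * pr p Y y

/-- A conditional pmf `w(u|x,y)`. -/
def CondPMF {X Y U : Type*} [Fintype U] (w : X → Y → U → ℝ) : Prop :=
  (∀ x y u, 0 ≤ w x y u) ∧ ∀ x y, ∑ u, w x y u = 1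

/-- The joint pmf `q(x,y) w(u|x,y)` on `X × Y × U`. -/
noncomputable def jointQ {X Y U : Type*} (q : X × Y → ℝ) (w : X → Y → U → ℝ) :
    X × Y × U → ℝ := fun ω => q (ω.1, ω.2.1) * w ω.1 ω.2.1 ω.2.2

/-- I(X;Y|U) under the joint pmf `q(x,y) w(u|x,y)`. -/
noncomputable def cmiXY {X Y U : Type*} [Fintype X] [DecidableEq X] [Fintype Y] [DecidableEq Y]
    [Fintype U] [DecidableEq U] (q : X × Y → ℝ) (w : X → Y → U → ℝ) : ℝ :=
  cmi (jointQ q w) (fun ω => ω.1) (fun ω => ω.2.1) (fun ω => ω.2.2)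

/-- I(X,Y;U) under the joint pmf `q(x,y) w(u|x,y)`. -/
noncomputable def miXYU {X Y U : Type*} [Fintype X] [DecidableEq X] [Fintype Y] [DecidableEq Y]
    [Fintype U] [DecidableEq U] (q : X × Y → ℝ) (w : X → Y → U → ℝ) : ℝ :=
  mi (jointQ q w) (fun ω => (ω.1, ω.2.1)) (fun ω => ω.2.2)

/-!
A channel `w` amounts to a decomposition `q = ∑ u, π u • Q u` of `q` into pmfs `Q u` on
`X × Y`, and then `I(X;Y|U) = ∑ u, π u * I(Q u)` and `I(X,Y;U) = H(q) - ∑ u, π u * H(Q u)` are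
affine in the weights `π`. As `|U| ≥ |X × Y| + 2`, some direction in weight space fixes the
mixture and `∑ u, π u * H(Q u)` without increasing `I(X;Y|U)`; moving along it until a weight
vanishes frees a symbol `u₀`. If then `I(X;Y|U) ≥ I(X,Y;U)` we are done. Otherwise give `u₀` the
component `q` itself with weight `1 - c`: this moves `I(X;Y|U)` towards `I(q) ≥ 0` and scales
`I(X,Y;U)` by `c`, and for the `c` equalising the two their common value is at most their
average, because `I(X;Y) ≤ I(X;Y|U) + I(X,Y;U)`.
-/

section Entropy

variable {Ω α β γ : Type*} [Fintype Ω] [Fintype α] [DecidableEq α] [Fintype β] [DecidableEq β]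
  [Fintype γ] [DecidableEq γ]

theorem sum_pr_mul (p : Ω → ℝ) (Z : Ω → α) (g : α → ℝ) :
    ∑ a, pr p Z a * g a = ∑ ω, p ω * g (Z ω) := by
  simp_rw [pr, sum_mul]
  rw [← sum_fiberwise univ Z (fun ω => p ω * g (Z ω))]
  exact sum_congr rfl fun a _ => sum_congr rfl fun ω hω => by rw [(mem_filter.1 hω).2]

theorem sum_pr (p : Ω → ℝ) (Z : Ω → α) : ∑ a, pr p Z a = ∑ ω, p ω := by
  simpa using sum_pr_mul p Z 1

theorem le_pr_apply {p : Ω → ℝ} (hp : ∀ ω, 0 ≤ p ω) (Z : Ω → α) (ω : Ω) :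
    p ω ≤ pr p Z (Z ω) :=
  single_le_sum (fun ω _ => hp ω) (by simp)

theorem pr_nonneg {p : Ω → ℝ} (hp : ∀ ω, 0 ≤ p ω) (Z : Ω → α) (a : α) : 0 ≤ pr p Z a :=
  sum_nonneg fun ω _ => hp ω

theorem pr_comp (p : Ω → ℝ) (W : Ω → β) (g : β → α) :
    pr (pr p W) g = pr p (fun ω => g (W ω)) := by
  funext a
  have h := sum_pr_mul p W fun b => if g b = a then (1 : ℝ) else 0
  simp only [mul_boole] at h
  rw [pr, sum_filter, h, pr, sum_filter]

theorem pr_equiv (p : Ω → ℝ) (e : Ω ≃ α) : pr p e = fun a => p (e.symm a) := by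
  funext a
  rw [pr, sum_filter, ← e.symm.sum_comp]
  simp

theorem sum_pr_prodMk_left (p : Ω → ℝ) (A : Ω → α) (C : Ω → γ) (c : γ) :
    ∑ a, pr p (fun ω => (A ω, C ω)) (a, c) = pr p C c := by
  rw [← pr_comp p (fun ω => (A ω, C ω)) Prod.snd]
  simp [pr, sum_filter, Fintype.sum_prod_type]

theorem ent_eq_neg_sum (p : Ω → ℝ) (Z : Ω → α) :
    ent p Z = -∑ ω, p ω * Real.logb 2 (pr p Z (Z ω)) := by
  rw [ent, sum_pr_mul p Z fun a => Real.logb 2 (pr p Z a)]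

theorem ent_congr {p : Ω → ℝ} {Z : Ω → α} {Z' : Ω → β}
    (h : ∀ ω ω', Z ω' = Z ω ↔ Z' ω' = Z' ω) : ent p Z = ent p Z' := by
  simp only [ent_eq_neg_sum, pr, filter_congr fun ω' _ => h _ ω']

theorem ent_pr (p : Ω → ℝ) (W : Ω → β) (g : β → α) :
    ent (pr p W) g = ent p (fun ω => g (W ω)) := by
  rw [ent, ent, pr_comp]

theorem mi_pr (p : Ω → ℝ) (W : Ω → γ) (A : γ → α) (B : γ → β) :
    mi (pr p W) A B = mi p (fun ω => A (W ω)) (fun ω => B (W ω)) := by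
  simp only [mi, ent_pr]

theorem cmi_pr {δ : Type*} [Fintype δ] [DecidableEq δ] (p : Ω → ℝ) (W : Ω → δ)
    (A : δ → α) (B : δ → β) (C : δ → γ) :
    cmi (pr p W) A B C = cmi p (fun ω => A (W ω)) (fun ω => B (W ω)) (fun ω => C (W ω)) := by
  simp only [cmi, centH, ent_pr]

theorem sum_mul_logb_nonpos {ι : Type*} [Fintype ι] {p r : ι → ℝ} (hp : ∀ i, 0 ≤ p i)
    (hr : ∀ i, 0 < p i → 0 < r i) (h : ∑ i, p i * r i ≤ ∑ i, p i) :
    ∑ i, p i * Real.logb 2 (r i) ≤ 0 := by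
  have hlog2 : 0 < Real.log 2 := Real.log_pos one_lt_two
  have key : ∀ i, p i * Real.logb 2 (r i) ≤ (p i * r i - p i) / Real.log 2 := by
    intro i
    rcases (hp i).eq_or_lt with h0 | hpos
    · simp [← h0]
    rw [Real.logb, ← mul_div_assoc, div_le_div_iff_of_pos_right hlog2]
    nlinarith [Real.log_le_sub_one_of_pos (hr i hpos)]
  calc ∑ i, p i * Real.logb 2 (r i) ≤ ∑ i, (p i * r i - p i) / Real.log 2 :=
        sum_le_sum fun i _ => key i
    _ = (∑ i, p i * r i - ∑ i, p i) / Real.log 2 := by rw [← sum_div, sum_sub_distrib]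
    _ ≤ 0 := div_nonpos_of_nonpos_of_nonneg (by linarith) hlog2.le

theorem sum_pr_mul_pr_div_pr (p : Ω → ℝ) (A : Ω → α) (B : Ω → β) (C : Ω → γ) :
    ∑ t : (α × β) × γ, pr p (fun ω => (A ω, C ω)) (t.1.1, t.2) *
      pr p (fun ω => (B ω, C ω)) (t.1.2, t.2) / pr p C t.2 = ∑ ω, p ω := by
  rw [Fintype.sum_prod_type_right]
  simp only [Fintype.sum_prod_type, ← sum_div, ← sum_mul_sum, sum_pr_prodMk_left,
    mul_self_div_self, sum_pr]

theorem cmi_nonneg {p : Ω → ℝ} (hp : ∀ ω, 0 ≤ p ω) (A : Ω → α) (B : Ω → β) (C : Ω → γ) :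
    0 ≤ cmi p A B C := by
  set pAC := pr p (fun ω => (A ω, C ω))
  set pBC := pr p (fun ω => (B ω, C ω))
  set pABC := pr p (fun ω => ((A ω, B ω), C ω))
  set pC := pr p C
  let g : (α × β) × γ → ℝ := fun t =>
    pAC (t.1.1, t.2) * pBC (t.1.2, t.2) / (pABC t * pC t.2)
  have hpos : ∀ ω, 0 < p ω → 0 < pAC (A ω, C ω) ∧ 0 < pBC (B ω, C ω) ∧
      0 < pABC ((A ω, B ω), C ω) ∧ 0 < pC (C ω) := fun ω hω =>
    ⟨hω.trans_le (le_pr_apply hp _ ω), hω.trans_le (le_pr_apply hp _ ω),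
      hω.trans_le (le_pr_apply hp _ ω), hω.trans_le (le_pr_apply hp _ ω)⟩
  have hlog : ∀ ω, p ω * Real.logb 2 (g ((A ω, B ω), C ω)) =
      p ω * Real.logb 2 (pAC (A ω, C ω)) + p ω * Real.logb 2 (pBC (B ω, C ω))
        - p ω * Real.logb 2 (pABC ((A ω, B ω), C ω)) - p ω * Real.logb 2 (pC (C ω)) := by
    intro ω
    rcases (hp ω).eq_or_lt with h0 | hω
    · simp [← h0]
    obtain ⟨h1, h2, h3, h4⟩ := hpos ω hω
    simp only [g, Real.logb_div (mul_pos h1 h2).ne' (mul_pos h3 h4).ne',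
      Real.logb_mul h1.ne' h2.ne', Real.logb_mul h3.ne' h4.ne']
    ring
  have hcmi : cmi p A B C = -∑ ω, p ω * Real.logb 2 (g ((A ω, B ω), C ω)) := by
    simp only [cmi, centH, ent_eq_neg_sum, hlog, sum_add_distrib, sum_sub_distrib]
    ring
  have hmass : ∑ ω, p ω * g ((A ω, B ω), C ω) ≤ ∑ ω, p ω :=
    calc ∑ ω, p ω * g ((A ω, B ω), C ω) = ∑ t, pABC t * g t := (sum_pr_mul p _ g).symm
      _ ≤ ∑ t : (α × β) × γ, pAC (t.1.1, t.2) * pBC (t.1.2, t.2) / pC t.2 := by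
        refine sum_le_sum fun t _ => ?_
        dsimp only [g]
        rcases (show 0 ≤ pABC t from pr_nonneg hp _ t).eq_or_lt with h0 | ht
        · rw [← h0, zero_mul]
          exact div_nonneg (mul_nonneg (pr_nonneg hp _ _) (pr_nonneg hp _ _)) (pr_nonneg hp _ _)
        · rw [mul_div_assoc', mul_div_mul_left _ _ ht.ne']
      _ = ∑ ω, p ω := sum_pr_mul_pr_div_pr p A B C
  rw [hcmi, neg_nonneg]
  refine sum_mul_logb_nonpos hp (fun ω hω => ?_) hmass
  obtain ⟨h1, h2, h3, h4⟩ := hpos ω hω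
  exact div_pos (mul_pos h1 h2) (mul_pos h3 h4)

theorem ent_prodMk_comm (p : Ω → ℝ) (A : Ω → α) (B : Ω → β) :
    ent p (fun ω => (A ω, B ω)) = ent p (fun ω => (B ω, A ω)) :=
  ent_congr (by simp [and_comm])

theorem ent_prodMk_unit (p : Ω → ℝ) (A : Ω → α) : ent p (fun ω => (A ω, ())) = ent p A :=
  ent_congr (by simp)

theorem mi_nonneg {p : Ω → ℝ} (hp : IsPMF p) (A : Ω → α) (B : Ω → β) : 0 ≤ mi p A B := by
  have h := cmi_nonneg hp.1 A B fun _ => ()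
  have hconst : ent p (fun _ => ()) = 0 := by simp [ent, pr, hp.2]
  simpa only [cmi, centH, ent_prodMk_unit, hconst, mi, sub_zero] using h

theorem mi_le_cmi_add_mi {p : Ω → ℝ} (hp : ∀ ω, 0 ≤ p ω) (A : Ω → α) (B : Ω → β)
    (C : Ω → γ) : mi p A B ≤ cmi p A B C + mi p (fun ω => (A ω, B ω)) C := by
  have h₁ := cmi_nonneg hp C B A
  have h₂ := cmi_nonneg hp C A B
  have hCBA : ent p (fun ω => ((C ω, B ω), A ω)) = ent p (fun ω => ((A ω, B ω), C ω)) :=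
    ent_congr (by simp; tauto)
  have hCAB : ent p (fun ω => ((C ω, A ω), B ω)) = ent p (fun ω => ((A ω, B ω), C ω)) :=
    ent_congr (by simp; tauto)
  simp only [cmi, centH, mi, hCBA, hCAB] at h₁ h₂ ⊢
  rw [ent_prodMk_comm p C A, ent_prodMk_comm p B A] at h₁
  rw [ent_prodMk_comm p C B] at h₂
  linarith

end Entropy

section Mixture

variable {S U α : Type*} [Fintype S] [Fintype U] [Fintype α] [DecidableEq α]

structure IsMixture (q : S → ℝ) (π : U → ℝ) (Q : U → S → ℝ) : Prop where
  weights : IsPMF π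
  components : ∀ u, IsPMF (Q u)
  sum_mul_eq : ∀ s, ∑ u, π u * Q u s = q s

def mixJoint (π : U → ℝ) (Q : U → S → ℝ) : S × U → ℝ := fun x => π x.2 * Q x.2 x.1

variable {q : S → ℝ} {π : U → ℝ} {Q : U → S → ℝ}

theorem IsMixture.isPMF (h : IsMixture q π Q) : IsPMF q := by
  refine ⟨fun s => ?_, ?_⟩
  · rw [← h.sum_mul_eq s]
    exact sum_nonneg fun u _ => mul_nonneg (h.weights.1 u) ((h.components u).1 s)
  · simp_rw [← h.sum_mul_eq, sum_comm (γ := S), ← mul_sum, (h.components _).2, mul_one,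
      h.weights.2]

theorem IsMixture.mixJoint_nonneg (h : IsMixture q π Q) (x : S × U) : 0 ≤ mixJoint π Q x :=
  mul_nonneg (h.weights.1 x.2) ((h.components x.2).1 x.1)

theorem pr_mixJoint_prodMk [DecidableEq U] (Z : S → α) (a : α) (u : U) :
    pr (mixJoint π Q) (fun x => (Z x.1, x.2)) (a, u) = π u * pr (Q u) Z a := by
  simp [pr, mixJoint, sum_filter, Fintype.sum_prod_type, mul_sum, ite_and]

theorem IsMixture.pr_mixJoint_fst [DecidableEq S] (h : IsMixture q π Q) :
    pr (mixJoint π Q) Prod.fst = q := by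
  funext s
  simp [pr, mixJoint, sum_filter, Fintype.sum_prod_type, ← h.sum_mul_eq]

theorem IsMixture.pr_mixJoint_snd [DecidableEq U] (h : IsMixture q π Q) :
    pr (mixJoint π Q) Prod.snd = π := by
  funext u
  simp [pr, mixJoint, sum_filter, Fintype.sum_prod_type_right, ← mul_sum, (h.components u).2]

theorem IsMixture.centH_mixJoint [DecidableEq U] (h : IsMixture q π Q) (Z : S → α) :
    centH (mixJoint π Q) (fun x => Z x.1) Prod.snd = ∑ u, π u * ent (Q u) Z := by
  have hsplit : ∀ x : S × U, mixJoint π Q x * Real.logb 2 (π x.2 * pr (Q x.2) Z (Z x.1)) =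
      mixJoint π Q x * Real.logb 2 (π x.2)
        + π x.2 * (Q x.2 x.1 * Real.logb 2 (pr (Q x.2) Z (Z x.1))) := by
    intro x
    rcases (h.mixJoint_nonneg x).eq_or_lt with h0 | hx
    · rcases mul_eq_zero.1 h0.symm with h1 | h1 <;> simp [mixJoint, h1]
    obtain ⟨hπ, hQ⟩ := (pos_and_pos_or_neg_and_neg_of_mul_pos hx).resolve_right
      fun hn => (h.weights.1 x.2).not_gt hn.1
    rw [Real.logb_mul hπ.ne' (hQ.trans_le (le_pr_apply (h.components x.2).1 Z x.1)).ne',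
      mixJoint]
    ring
  rw [centH, ent_eq_neg_sum, ent_eq_neg_sum, h.pr_mixJoint_snd]
  simp only [pr_mixJoint_prodMk, hsplit, sum_add_distrib, neg_add, add_sub_cancel_left]
  rw [Fintype.sum_prod_type_right]
  simp only [ent_eq_neg_sum, mul_neg, ← mul_sum, sum_neg_distrib]

noncomputable def mixtureMI [DecidableEq S] (q : S → ℝ) (π : U → ℝ) (Q : U → S → ℝ) : ℝ :=
  ent q id - ∑ u, π u * ent (Q u) id

theorem IsMixture.mi_mixJoint [DecidableEq S] [DecidableEq U] (h : IsMixture q π Q) :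
    mi (mixJoint π Q) Prod.fst Prod.snd = mixtureMI q π Q := by
  have hfst : ent (mixJoint π Q) Prod.fst = ent q id := by
    rw [← h.pr_mixJoint_fst, ent_pr]
    rfl
  rw [mi, mixtureMI, hfst, ← h.centH_mixJoint id, centH]
  simp only [id]
  ring

end Mixture

section Reduction

variable {S U : Type*} [Fintype S] [Fintype U]

theorem exists_ne_zero_sum_mul_eq_zero (hcard : Fintype.card S + 1 < Fintype.card U)
    (Q : U → S → ℝ) (b : U → ℝ) :
    ∃ z : U → ℝ, z ≠ 0 ∧ (∀ s, ∑ u, z u * Q u s = 0) ∧ ∑ u, z u * b u = 0 := by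
  have hdep : ¬LinearIndependent ℝ fun u => (Q u, b u) := fun hli => by
    have := hli.fintype_card_le_finrank
    simp only [Module.finrank_prod, Module.finrank_fintype_fun_eq_card, Module.finrank_self]
      at this
    omega
  obtain ⟨z, hz, u, hu⟩ := Fintype.not_linearIndependent_iff.1 hdep
  refine ⟨z, fun h => hu (congrFun h u), fun s => ?_, ?_⟩
  · simpa [Prod.fst_sum, Finset.sum_apply] using congrArg (fun v => v.1 s) hz
  · simpa [Prod.snd_sum] using congrArg Prod.snd hz

theorem exists_sub_mul_nonneg_eq_zero {π z : U → ℝ} (hπ : ∀ u, 0 ≤ π u) (hz : ∃ u, 0 < z u) :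
    ∃ t, 0 ≤ t ∧ (∀ u, 0 ≤ π u - t * z u) ∧ ∃ u₀, π u₀ - t * z u₀ = 0 := by
  obtain ⟨u₀, hu₀, hmin⟩ := (univ.filter fun u => 0 < z u).exists_min_image
    (fun u => π u / z u) (by simpa [Finset.Nonempty] using hz)
  have hz₀ : 0 < z u₀ := (mem_filter.1 hu₀).2
  refine ⟨π u₀ / z u₀, div_nonneg (hπ u₀) hz₀.le, fun u => ?_, u₀, ?_⟩
  · by_cases hu : 0 < z u
    · have := (le_div_iff₀ hu).1 (hmin u (by simp [hu]))
      linarith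
    · nlinarith [div_nonneg (hπ u₀) hz₀.le, hπ u]
  · rw [div_mul_cancel₀ _ hz₀.ne', sub_self]

variable {q : S → ℝ} {π : U → ℝ} {Q : U → S → ℝ}

theorem IsMixture.exists_reweight_eq_zero (hcard : Fintype.card S + 2 ≤ Fintype.card U)
    (h : IsMixture q π Q) (a b : U → ℝ) :
    ∃ π' : U → ℝ, IsMixture q π' Q ∧ ∑ u, π' u * a u ≤ ∑ u, π u * a u ∧
      ∑ u, π' u * b u = ∑ u, π u * b u ∧ ∃ u₀, π' u₀ = 0 := by
  obtain ⟨z, hz, hzQ, hzb⟩ := exists_ne_zero_sum_mul_eq_zero (by omega) Q b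
  have hzsum : ∑ u, z u = 0 :=
    calc ∑ u, z u = ∑ u, z u * ∑ s, Q u s := by simp [(h.components _).2]
      _ = ∑ s, ∑ u, z u * Q u s := by simp only [mul_sum]; exact sum_comm
      _ = 0 := by simp [hzQ]
  wlog hza : 0 ≤ ∑ u, z u * a u generalizing z
  · exact this (-z) (neg_ne_zero.2 hz) (by simpa using hzQ) (by simpa using hzb)
      (by simpa using hzsum) (by simp only [Pi.neg_apply, neg_mul, sum_neg_distrib]; linarith)
  obtain ⟨u₁, -, hu₁⟩ := exists_pos_of_sum_zero_of_exists_nonzero z hzsum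
    (by simpa [Function.ne_iff] using hz)
  obtain ⟨t, ht, hnn, u₀, hu₀⟩ := exists_sub_mul_nonneg_eq_zero h.weights.1 ⟨u₁, hu₁⟩
  have hsum : ∀ f : U → ℝ, ∑ u, (π u - t * z u) * f u = ∑ u, π u * f u - t * ∑ u, z u * f u :=
    fun f => by simp only [sub_mul, sum_sub_distrib, mul_sum, mul_assoc]
  refine ⟨fun u => π u - t * z u, ⟨⟨hnn, ?_⟩, h.components, fun s => ?_⟩, ?_, ?_, u₀, hu₀⟩
  · simpa [hzsum, h.weights.2] using hsum 1
  · rw [hsum fun u => Q u s, hzQ, h.sum_mul_eq, mul_zero, sub_zero]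
  · rw [hsum]
    nlinarith [mul_nonneg ht hza]
  · rw [hsum, hzb, mul_zero, sub_zero]

end Reduction

section FreeSymbol

variable {S U : Type*} [Fintype U] [DecidableEq U] {q : S → ℝ} {π : U → ℝ}
  {Q : U → S → ℝ} {u₀ : U}

theorem sum_mul_update_of_eq_zero (hu₀ : π u₀ = 0) (c : ℝ) (g : (S → ℝ) → ℝ) :
    ∑ u, (c • π + (1 - c) • Pi.single u₀ 1 : U → ℝ) u * g (Function.update Q u₀ q u) =
      c * ∑ u, π u * g (Q u) + (1 - c) * g q := by
  have hπ : ∀ u, π u * g (Function.update Q u₀ q u) = π u * g (Q u) := by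
    intro u
    rcases eq_or_ne u u₀ with rfl | hu
    · simp [hu₀]
    · rw [Function.update_of_ne hu]
  simp [add_mul, sum_add_distrib, mul_assoc, ← mul_sum, hπ, Pi.single_apply]

theorem IsMixture.update [Fintype S] (h : IsMixture q π Q) (hu₀ : π u₀ = 0) {c : ℝ}
    (hc₀ : 0 ≤ c) (hc₁ : c ≤ 1) :
    IsMixture q (c • π + (1 - c) • Pi.single u₀ 1) (Function.update Q u₀ q) := by
  refine ⟨⟨fun u => ?_, ?_⟩, fun u => ?_, fun s => ?_⟩
  · have := h.weights.1 u
    simp only [Pi.add_apply, Pi.smul_apply, smul_eq_mul, Pi.single_apply]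
    split_ifs <;> nlinarith
  · simpa [h.weights.2] using sum_mul_update_of_eq_zero (Q := Q) (q := q) hu₀ c fun _ => 1
  · rcases eq_or_ne u u₀ with rfl | hu
    · simpa using h.isPMF
    · simpa [Function.update_of_ne hu] using h.components u
  · rw [sum_mul_update_of_eq_zero hu₀ c fun μ => μ s, h.sum_mul_eq]
    ring

end FreeSymbol

theorem exists_balancing_weight {f₁ f₂ i : ℝ} (hi : 0 ≤ i) (hle : i ≤ f₁ + f₂)
    (hlt : f₁ < f₂) :
    ∃ c, 0 ≤ c ∧ c ≤ 1 ∧ c * f₁ + (1 - c) * i = c * f₂ ∧ c * f₂ ≤ (f₁ + f₂) / 2 := by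
  have hd : 0 < i + (f₂ - f₁) := by linarith
  refine ⟨i / (i + (f₂ - f₁)), div_nonneg hi hd.le, (div_le_one hd).2 (by linarith), ?_, ?_⟩
  · field_simp
    ring
  · rw [div_mul_eq_mul_div, div_le_div_iff₀ hd two_pos]
    nlinarith [mul_nonneg (sub_nonneg.2 hlt.le) (sub_nonneg.2 hle)]

section Channel

variable {X Y U : Type*} [Fintype X] [Fintype Y] [Fintype U]
  {q : X × Y → ℝ} {π : U → ℝ} {Q : U → X × Y → ℝ} {w : X → Y → U → ℝ} {u₀ : U}

theorem exists_isMixture_of_condPMF (hq : IsPMF q) (hw : CondPMF w) :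
    ∃ (π : U → ℝ) (Q : U → X × Y → ℝ), IsMixture q π Q ∧
      ∀ x y u, q (x, y) * w x y u = π u * Q u (x, y) := by
  set π : U → ℝ := fun u => ∑ s, q s * w s.1 s.2 u
  have hterm : ∀ u s, 0 ≤ q s * w s.1 s.2 u := fun u s => mul_nonneg (hq.1 s) (hw.1 _ _ u)
  have hπ : ∀ u, 0 ≤ π u := fun u => sum_nonneg fun s _ => hterm u s
  set Q : U → X × Y → ℝ := fun u s => if π u = 0 then q s else q s * w s.1 s.2 u / π u
  have hrel : ∀ u s, q s * w s.1 s.2 u = π u * Q u s := by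
    intro u s
    by_cases hu : π u = 0
    · rw [hu, zero_mul]
      exact (sum_eq_zero_iff_of_nonneg fun s _ => hterm u s).1 hu s (mem_univ s)
    · simp only [Q, if_neg hu]
      field_simp
  refine ⟨π, Q, ⟨⟨hπ, ?_⟩, fun u => ⟨fun s => ?_, ?_⟩, fun s => ?_⟩, fun x y u => hrel u (x, y)⟩
  · simp only [π]
    rw [sum_comm]
    simp [← mul_sum, hw.2, hq.2]
  · simp only [Q]
    split_ifs
    exacts [hq.1 s, div_nonneg (hterm u s) (hπ u)]
  · by_cases hu : π u = 0
    · simp [Q, hu, hq.2]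
    · simp only [Q, if_neg hu, ← sum_div]
      exact div_self hu
  · simp [← hrel, ← mul_sum, hw.2]

theorem IsMixture.exists_condPMF (h : IsMixture q π Q) :
    ∃ w : X → Y → U → ℝ, CondPMF w ∧ ∀ x y u, q (x, y) * w x y u = π u * Q u (x, y) := by
  have hq := h.isPMF
  refine ⟨fun x y u => if q (x, y) = 0 then π u else π u * Q u (x, y) / q (x, y),
    ⟨fun x y u => ?_, fun x y => ?_⟩, fun x y u => ?_⟩
  all_goals dsimp only
  · split_ifs
    exacts [h.weights.1 u,
      div_nonneg (mul_nonneg (h.weights.1 u) ((h.components u).1 _)) (hq.1 _)]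
  · split_ifs with h0
    · exact h.weights.2
    · rw [← sum_div, h.sum_mul_eq, div_self h0]
  · split_ifs with h0
    · rw [h0, zero_mul, eq_comm]
      refine (sum_eq_zero_iff_of_nonneg fun v _ => ?_).1 (h.sum_mul_eq (x, y) ▸ h0) u (mem_univ u)
      exact mul_nonneg (h.weights.1 v) ((h.components v).1 _)
    · field_simp

variable [DecidableEq X] [DecidableEq Y] [DecidableEq U]

noncomputable def mixtureCMI (π : U → ℝ) (Q : U → X × Y → ℝ) : ℝ :=
  ∑ u, π u * mi (Q u) Prod.fst Prod.snd

theorem IsMixture.cmi_mixJoint (h : IsMixture q π Q) :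
    cmi (mixJoint π Q) (fun x => x.1.1) (fun x => x.1.2) Prod.snd = mixtureCMI π Q := by
  rw [cmi, h.centH_mixJoint Prod.fst, h.centH_mixJoint Prod.snd,
    h.centH_mixJoint fun s => (s.1, s.2), mixtureCMI, ← sum_add_distrib, ← sum_sub_distrib]
  simp only [mi, ← mul_add, ← mul_sub]

theorem IsMixture.mi_le_mixtureCMI_add_mixtureMI (h : IsMixture q π Q) :
    mi q Prod.fst Prod.snd ≤ mixtureCMI π Q + mixtureMI q π Q := by
  have hq : mi (mixJoint π Q) (fun x => x.1.1) (fun x => x.1.2) = mi q Prod.fst Prod.snd := by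
    rw [← h.pr_mixJoint_fst, mi_pr]
  have hMI : mi (mixJoint π Q) (fun x => (x.1.1, x.1.2)) Prod.snd = mixtureMI q π Q :=
    h.mi_mixJoint
  have key := mi_le_cmi_add_mi h.mixJoint_nonneg (fun x => x.1.1) (fun x => x.1.2) Prod.snd
  rwa [hq, h.cmi_mixJoint, hMI] at key

theorem pr_jointQ_prodAssoc_symm (hw : ∀ x y u, q (x, y) * w x y u = π u * Q u (x, y)) :
    pr (jointQ q w) (Equiv.prodAssoc X Y U).symm = mixJoint π Q := by
  rw [pr_equiv]
  funext x
  exact hw _ _ _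

theorem cmiXY_eq_mixtureCMI (h : IsMixture q π Q)
    (hw : ∀ x y u, q (x, y) * w x y u = π u * Q u (x, y)) :
    cmiXY q w = mixtureCMI π Q := by
  rw [← h.cmi_mixJoint, ← pr_jointQ_prodAssoc_symm hw, cmi_pr]
  rfl

theorem miXYU_eq_mixtureMI (h : IsMixture q π Q)
    (hw : ∀ x y u, q (x, y) * w x y u = π u * Q u (x, y)) :
    miXYU q w = mixtureMI q π Q := by
  rw [← h.mi_mixJoint, ← pr_jointQ_prodAssoc_symm hw, mi_pr]
  rfl

theorem mixtureCMI_update (hu₀ : π u₀ = 0) (c : ℝ) :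
    mixtureCMI (c • π + (1 - c) • Pi.single u₀ 1) (Function.update Q u₀ q) =
      c * mixtureCMI π Q + (1 - c) * mi q Prod.fst Prod.snd :=
  sum_mul_update_of_eq_zero hu₀ c fun μ => mi μ Prod.fst Prod.snd

theorem mixtureMI_update (hu₀ : π u₀ = 0) (c : ℝ) :
    mixtureMI q (c • π + (1 - c) • Pi.single u₀ 1) (Function.update Q u₀ q) =
      c * mixtureMI q π Q := by
  rw [mixtureMI, mixtureMI, sum_mul_update_of_eq_zero hu₀ c fun μ => ent μ id]
  ring

theorem IsMixture.exists_max_le (hcard : Fintype.card (X × Y) + 2 ≤ Fintype.card U)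
    (h : IsMixture q π Q) :
    ∃ (π' : U → ℝ) (Q' : U → X × Y → ℝ), IsMixture q π' Q' ∧
      max (mixtureCMI π' Q') (mixtureMI q π' Q') ≤
        max (mixtureCMI π Q) ((mixtureCMI π Q + mixtureMI q π Q) / 2) := by
  obtain ⟨π', h', hcmi, hent, u₀, hu₀⟩ :=
    h.exists_reweight_eq_zero hcard (fun u => mi (Q u) Prod.fst Prod.snd) fun u => ent (Q u) id
  replace hcmi : mixtureCMI π' Q ≤ mixtureCMI π Q := hcmi
  replace hent : mixtureMI q π' Q = mixtureMI q π Q := by rw [mixtureMI, mixtureMI, hent]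
  rcases le_or_gt (mixtureMI q π' Q) (mixtureCMI π' Q) with hle | hlt
  · exact ⟨π', Q, h', (max_eq_left hle).trans_le (hcmi.trans (le_max_left _ _))⟩
  obtain ⟨c, hc₀, hc₁, hbal, hhalf⟩ :=
    exists_balancing_weight (mi_nonneg h.isPMF _ _) h'.mi_le_mixtureCMI_add_mixtureMI hlt
  refine ⟨_, _, h'.update hu₀ hc₀ hc₁, ?_⟩
  rw [mixtureCMI_update hu₀, mixtureMI_update hu₀, hbal, max_self]
  calc c * mixtureMI q π' Q ≤ (mixtureCMI π' Q + mixtureMI q π' Q) / 2 := hhalf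
    _ ≤ (mixtureCMI π Q + mixtureMI q π Q) / 2 := by linarith
    _ ≤ _ := le_max_right _ _

end Channel

/-- The two minimax characterizations of the optimal transmission rate coincide:
`min_p max{I(X;Y|U), (I(X;Y|U)+I(X,Y;U))/2} = min_p max{I(X;Y|U), I(X,Y;U)}`,
where `p` ranges over conditional pmfs `p(u|x,y)` with `|U| ≤ |X||Y|+2`. -/
theorem stmt9 {X Y : Type*} [Fintype X] [DecidableEq X] [Fintype Y] [DecidableEq Y]
    (q : X × Y → ℝ) (hq : IsPMF q) :
    sInf { z : ℝ | ∃ w : X → Y → Fin (Fintype.card X * Fintype.card Y + 2) → ℝ,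
        CondPMF w ∧ z = max (cmiXY q w) ((cmiXY q w + miXYU q w) / 2) }
      = sInf { z : ℝ | ∃ w : X → Y → Fin (Fintype.card X * Fintype.card Y + 2) → ℝ,
        CondPMF w ∧ z = max (cmiXY q w) (miXYU q w) } := by
  apply csInf_eq_csInf_of_forall_exists_le
  · rintro _ ⟨w, hw, rfl⟩
    obtain ⟨π, Q, h, hrepr⟩ := exists_isMixture_of_condPMF hq hw
    obtain ⟨π', Q', h', hle⟩ := h.exists_max_le (by simp [Fintype.card_prod])
    obtain ⟨w', hw', hrepr'⟩ := h'.exists_condPMF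
    refine ⟨_, ⟨w', hw', rfl⟩, ?_⟩
    rwa [cmiXY_eq_mixtureCMI h' hrepr', miXYU_eq_mixtureMI h' hrepr', cmiXY_eq_mixtureCMI h hrepr,
      miXYU_eq_mixtureMI h hrepr]
  · rintro _ ⟨w, hw, rfl⟩
    refine ⟨_, ⟨w, hw, rfl⟩, max_le (le_max_left _ _) ?_⟩
    linarith [le_max_left (cmiXY q w) (miXYU q w), le_max_right (cmiXY q w) (miXYU q w)]
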